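/- arXiv:2512.06631 — 5 statements merged into one kernel-verified Lean document; each statement's English description precedes it below -/
import Mathlib

section
/- Let ζ : ℕ → ℝ be a nondecreasing knot sequence, p ≥ 0, and let j ≥ p be an index with ζ_j ≤ x < ζ_{j+1}. Then the B-spline basis functions of degree p form a partition of unity at x: the sum of B_{i,p}(x) over i = j − p, j − p + 1, …, j equals 1. -/
/-!
Each `B_{i,p}` is supported in `[ζ_i, ζ_{i+p+1})`. Writing `ω_i(x) = (x - ζ_i) / (ζ_{i+p+1} - ζ_i)`,
the recursion reads `B_{i,p+1} = ω_i B_{i,p} + (1 - ω_{i+1}) B_{i+1,p}`, so summing over a window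
of indices telescopes to the degree-`p` sum over the shifted window plus two boundary terms, which
vanish by the support property. Induction on `p` reduces to degree `0`, where exactly one indicator
is nonzero.
-/

/-- The Cox–de Boor B-spline basis function `B_{i,p}` for the knot sequence `ζ`,
with the convention that any term whose denominator vanishes is taken to be zero. -/
noncomputable def coxDeBoor (ζ : ℕ → ℝ) : ℕ → ℕ → ℝ → ℝ
  | 0, i, x => if ζ i ≤ x ∧ x < ζ (i + 1) then 1 else 0
  | p + 1, i, x =>
      (if ζ (i + p + 1) = ζ i then 0
       else (x - ζ i) / (ζ (i + p + 1) - ζ i) * coxDeBoor ζ p i x) +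
      (if ζ (i + p + 2) = ζ (i + 1) then 0
       else (ζ (i + p + 2) - x) / (ζ (i + p + 2) - ζ (i + 1)) * coxDeBoor ζ p (i + 1) x)

namespace coxDeBoor

open Finset

variable {ζ : ℕ → ℝ}

theorem eq_zero_of_lt_knot (hζ : Monotone ζ) (p : ℕ) {i : ℕ} {x : ℝ} (hx : x < ζ i) :
    coxDeBoor ζ p i x = 0 := by
  induction p generalizing i with
  | zero => simp [coxDeBoor, hx.not_ge]
  | succ p ih =>
    rw [coxDeBoor, ih hx, ih (hx.trans_le (hζ i.le_succ))]
    simp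

theorem eq_zero_of_knot_le (hζ : Monotone ζ) (p : ℕ) {i : ℕ} {x : ℝ} (hx : ζ (i + p + 1) ≤ x) :
    coxDeBoor ζ p i x = 0 := by
  induction p generalizing i with
  | zero => simp [coxDeBoor, hx.not_gt]
  | succ p ih =>
    rw [coxDeBoor, ih ((hζ (by omega)).trans hx), ih ((hζ (by omega)).trans hx)]
    simp

theorem eq_zero_of_knot_eq (hζ : Monotone ζ) (p : ℕ) {i : ℕ} (x : ℝ) (h : ζ (i + p + 1) = ζ i) :
    coxDeBoor ζ p i x = 0 := by
  rcases lt_or_ge x (ζ i) with hx | hx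
  · exact eq_zero_of_lt_knot hζ p hx
  · exact eq_zero_of_knot_le hζ p (h ▸ hx)

/-- A vanishing denominator needs no case split in the left term, since `a / 0 = 0`, while in the
right term it forces `B_{i+1,p} = 0`. -/
theorem succ_eq_telescope (hζ : Monotone ζ) (p i : ℕ) (x : ℝ) :
    coxDeBoor ζ (p + 1) i x =
      (x - ζ i) / (ζ (i + p + 1) - ζ i) * coxDeBoor ζ p i x + coxDeBoor ζ p (i + 1) x -
        (x - ζ (i + 1)) / (ζ (i + 1 + p + 1) - ζ (i + 1)) * coxDeBoor ζ p (i + 1) x := by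
  have hidx : i + 1 + p + 1 = i + p + 2 := by omega
  have hleft : (if ζ (i + p + 1) = ζ i then 0
      else (x - ζ i) / (ζ (i + p + 1) - ζ i) * coxDeBoor ζ p i x) =
      (x - ζ i) / (ζ (i + p + 1) - ζ i) * coxDeBoor ζ p i x := by
    split_ifs with h <;> simp [h]
  rw [coxDeBoor, hleft, hidx]
  by_cases h : ζ (i + p + 2) = ζ (i + 1)
  · simp [h, eq_zero_of_knot_eq hζ p x ((congrArg ζ hidx).trans h)]
  · rw [if_neg h]
    field_simp [sub_ne_zero.mpr h]
    ring

theorem sum_Ico_eq_one (hζ : Monotone ζ) {j : ℕ} {x : ℝ} (hx₁ : ζ j ≤ x) (hx₂ : x < ζ (j + 1))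
    (p : ℕ) {a b : ℕ} (ha : a + p ≤ j) (hb : j < b) :
    ∑ i ∈ Ico a b, coxDeBoor ζ p i x = 1 := by
  induction p generalizing a b with
  | zero =>
    rw [sum_eq_single_of_mem j (mem_Ico.mpr ⟨by omega, hb⟩)]
    · simp [coxDeBoor, hx₁, hx₂]
    · intro i _ hij
      rcases hij.lt_or_gt with hi | hi
      · exact eq_zero_of_knot_le hζ 0 ((hζ (by omega)).trans hx₁)
      · exact eq_zero_of_lt_knot hζ 0 (hx₂.trans_le (hζ (by omega)))
  | succ p ih =>
    set g : ℕ → ℝ := fun k => (x - ζ k) / (ζ (k + p + 1) - ζ k) * coxDeBoor ζ p k x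
    have hga : g a = 0 := by
      simp [g, eq_zero_of_knot_le hζ p (i := a) ((hζ (by omega)).trans hx₁)]
    have hgb : g b = 0 := by
      simp [g, eq_zero_of_lt_knot hζ p (i := b) (hx₂.trans_le (hζ (by omega)))]
    calc ∑ i ∈ Ico a b, coxDeBoor ζ (p + 1) i x
        = ∑ i ∈ Ico a b, coxDeBoor ζ p (i + 1) x - ∑ i ∈ Ico a b, (g (i + 1) - g i) := by
          rw [← sum_sub_distrib]
          exact sum_congr rfl fun i _ => by rw [succ_eq_telescope hζ]; ring
      _ = ∑ i ∈ Ico (a + 1) (b + 1), coxDeBoor ζ p i x - (g b - g a) := by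
          rw [sum_Ico_add' (fun i => coxDeBoor ζ p i x), sum_Ico_sub g (by omega)]
      _ = 1 := by rw [ih (by omega) (by omega), hga, hgb, sub_zero, sub_zero]

end coxDeBoor

/-- partition of unity. If `j ≥ p` and `ζ_j ≤ x < ζ_{j+1}`, then the B-spline
basis functions of degree `p` sum to `1` at `x` over `i = j - p, …, j`. -/
theorem coxDeBoor_partition_of_unity (ζ : ℕ → ℝ) (hζ : Monotone ζ) (p j : ℕ) (hj : p ≤ j)
    (x : ℝ) (hx1 : ζ j ≤ x) (hx2 : x < ζ (j + 1)) :
    ∑ i ∈ Finset.Icc (j - p) j, coxDeBoor ζ p i x = 1 := by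
  rw [← Finset.Ico_add_one_right_eq_Icc]
  exact coxDeBoor.sum_Ico_eq_one hζ hx1 hx2 p (by omega) (by omega)
end

section
/- Let ζ : ℕ → ℝ be a strictly increasing knot sequence, p ≥ 1, and let x be a real number that is not equal to any knot ζ_j. Then the B-spline basis function B_{i,p} is differentiable at x and its derivative satisfies B'_{i,p}(x) = (p/(ζ_{i+p} − ζ_i)) · B_{i,p−1}(x) − (p/(ζ_{i+p+1} − ζ_{i+1})) · B_{i+1,p−1}(x). -/
open Filter Topology Function

theorem eventually_le_iff_of_ne {α : Type*} [LinearOrder α] [TopologicalSpace α]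
    [OrderClosedTopology α] {a x : α} (h : x ≠ a) : ∀ᶠ y in 𝓝 x, (a ≤ y ↔ a ≤ x) := by
  rcases h.lt_or_gt with h | h
  · filter_upwards [eventually_lt_nhds h] with y hy
    simp [hy.not_ge, h.not_ge]
  · filter_upwards [eventually_gt_nhds h] with y hy
    simp [hy.le, h.le]

theorem sub_div_add_sub_div_eq_one {a e : ℝ} (x : ℝ) (h : e - a ≠ 0) :
    (x - a) / (e - a) + (e - x) / (e - a) = 1 := by
  rw [← add_div, sub_add_sub_cancel', div_self h]

noncomputable def coxDeBoorDeriv (ζ : ℕ → ℝ) (p i : ℕ) (x : ℝ) : ℝ :=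
  p / (ζ (i + p) - ζ i) * coxDeBoor ζ (p - 1) i x -
    p / (ζ (i + p + 1) - ζ (i + 1)) * coxDeBoor ζ (p - 1) (i + 1) x

theorem coxDeBoorDeriv_succ (ζ : ℕ → ℝ) (p i : ℕ) (x : ℝ) :
    coxDeBoorDeriv ζ (p + 1) i x =
      (p + 1) / (ζ (i + p + 1) - ζ i) * coxDeBoor ζ p i x -
        (p + 1) / (ζ (i + p + 2) - ζ (i + 1)) * coxDeBoor ζ p (i + 1) x := by
  simp only [coxDeBoorDeriv, Nat.add_sub_cancel, Nat.cast_succ, ← add_assoc]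

namespace coxDeBoor

variable {ζ : ℕ → ℝ}

/-- The `if`s of the definition are redundant, since division by zero gives zero. -/
theorem succ_apply (ζ : ℕ → ℝ) (p i : ℕ) (x : ℝ) :
    coxDeBoor ζ (p + 1) i x =
      (x - ζ i) / (ζ (i + p + 1) - ζ i) * coxDeBoor ζ p i x +
        (ζ (i + p + 2) - x) / (ζ (i + p + 2) - ζ (i + 1)) * coxDeBoor ζ p (i + 1) x := by
  simp only [coxDeBoor]
  split_ifs <;> simp_all

theorem zero_hasDerivAt {i : ℕ} {x : ℝ} (hi : x ≠ ζ i) (hi' : x ≠ ζ (i + 1)) :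
    HasDerivAt (coxDeBoor ζ 0 i) 0 x := by
  refine (hasDerivAt_const x (coxDeBoor ζ 0 i x)).congr_of_eventuallyEq ?_
  filter_upwards [eventually_le_iff_of_ne hi, eventually_le_iff_of_ne hi'] with y hle hlt
  simp only [coxDeBoor, ← not_le, hle, hlt]

theorem weighted_add_coxDeBoorDeriv (hζ : Injective ζ) (p i : ℕ) (x : ℝ) :
    (x - ζ i) / (ζ (i + p + 1) - ζ i) * coxDeBoorDeriv ζ p i x +
        (ζ (i + p + 2) - x) / (ζ (i + p + 2) - ζ (i + 1)) * coxDeBoorDeriv ζ p (i + 1) x =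
      p / (ζ (i + p + 1) - ζ i) * coxDeBoor ζ p i x -
        p / (ζ (i + p + 2) - ζ (i + 1)) * coxDeBoor ζ p (i + 1) x := by
  cases p with
  | zero => simp [coxDeBoorDeriv]
  | succ q =>
    simp only [coxDeBoorDeriv_succ, succ_apply, Nat.cast_succ, add_assoc, add_left_comm 1 q,
      Nat.reduceAdd]
    have hq2 : ζ (i + (q + 2)) - ζ i ≠ 0 := sub_ne_zero.mpr (hζ.ne (by omega))
    have hq3 : ζ (i + (q + 3)) - ζ (i + 1) ≠ 0 := sub_ne_zero.mpr (hζ.ne (by omega))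
    linear_combination ((q + 1) / (ζ (i + (q + 2)) - ζ (i + 1)) * coxDeBoor ζ q (i + 1) x) *
      (sub_div_add_sub_div_eq_one x hq3 - sub_div_add_sub_div_eq_one x hq2)

theorem hasDerivAt (hζ : Injective ζ) {x : ℝ} (hx : ∀ j, x ≠ ζ j) (p i : ℕ) :
    HasDerivAt (coxDeBoor ζ p i) (coxDeBoorDeriv ζ p i x) x := by
  induction p generalizing i with
  | zero => simpa [coxDeBoorDeriv] using zero_hasDerivAt (hx i) (hx (i + 1))
  | succ p ih =>
    have hleft : HasDerivAt (fun y => (y - ζ i) / (ζ (i + p + 1) - ζ i))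
        (1 / (ζ (i + p + 1) - ζ i)) x :=
      ((hasDerivAt_id x).sub_const _).div_const _
    have hright : HasDerivAt (fun y => (ζ (i + p + 2) - y) / (ζ (i + p + 2) - ζ (i + 1)))
        (-1 / (ζ (i + p + 2) - ζ (i + 1))) x :=
      ((hasDerivAt_id x).const_sub _).div_const _
    rw [funext (succ_apply ζ p i)]
    refine ((hleft.mul (ih i)).add (hright.mul (ih (i + 1)))).congr_deriv ?_
    rw [coxDeBoorDeriv_succ]
    linear_combination weighted_add_coxDeBoorDeriv hζ p i x

end coxDeBoor

theorem coxDeBoor_hasDerivAt_general (ζ : ℕ → ℝ) (hζ : StrictMono ζ) (p : ℕ)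
    (i : ℕ) (x : ℝ) (hx : ∀ j : ℕ, x ≠ ζ j) :
    HasDerivAt (coxDeBoor ζ p i)
      ((p : ℝ) / (ζ (i + p) - ζ i) * coxDeBoor ζ (p - 1) i x -
        (p : ℝ) / (ζ (i + p + 1) - ζ (i + 1)) * coxDeBoor ζ (p - 1) (i + 1) x) x :=
  coxDeBoor.hasDerivAt hζ.injective hx p i

/-- for a strictly increasing knot sequence, degree `p ≥ 1`, and `x` not equal
to any knot, `B_{i,p}` is differentiable at `x` with derivative
`p/(ζ_{i+p} − ζ_i) · B_{i,p−1}(x) − p/(ζ_{i+p+1} − ζ_{i+1}) · B_{i+1,p−1}(x)`. -/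
theorem coxDeBoor_hasDerivAt (ζ : ℕ → ℝ) (hζ : StrictMono ζ) (p : ℕ) (hp : 1 ≤ p)
    (i : ℕ) (x : ℝ) (hx : ∀ j : ℕ, x ≠ ζ j) :
    HasDerivAt (coxDeBoor ζ p i)
      ((p : ℝ) / (ζ (i + p) - ζ i) * coxDeBoor ζ (p - 1) i x -
        (p : ℝ) / (ζ (i + p + 1) - ζ (i + 1)) * coxDeBoor ζ (p - 1) (i + 1) x) x :=
  coxDeBoor_hasDerivAt_general ζ hζ p i x hx
end

section
/- Let ζ : ℕ → ℝ be a nondecreasing knot sequence, p ≥ 0, i an index, and j an index with ζ_j < ζ_{j+1}. Then on the half-open knot interval [ζ_j, ζ_{j+1}) the B-spline basis function B_{i,p} coincides with a polynomial of degree at most p: there exists a polynomial q ∈ ℝ[X] with deg q ≤ p such that B_{i,p}(x) = q(x) for all x with ζ_j ≤ x < ζ_{j+1}. -/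
/-- on every nontrivial knot interval `[ζ_j, ζ_{j+1})`, the B-spline basis
function `B_{i,p}` coincides with a polynomial of degree at most `p`. -/
theorem coxDeBoor_piecewise_polynomial (ζ : ℕ → ℝ) (hζ : Monotone ζ) (p i j : ℕ)
    (hj : ζ j < ζ (j + 1)) :
    ∃ q : Polynomial ℝ, q.natDegree ≤ p ∧
      ∀ x : ℝ, ζ j ≤ x → x < ζ (j + 1) → coxDeBoor ζ p i x = q.eval x := by
  induction p generalizing i with
  | zero =>
    by_cases hij : i = j
    · subst hij
      exact ⟨1, by simp, fun x hx1 hx2 => by simp [coxDeBoor, hx1, hx2]⟩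
    · refine ⟨0, by simp, fun x hx1 hx2 => ?_⟩
      rcases Nat.lt_or_ge i j with h | h
      · have : ζ (i + 1) ≤ ζ j := hζ h
        simp only [coxDeBoor, Polynomial.eval_zero, ite_eq_right_iff, and_imp]
        intro _ h2
        linarith
      · have hji : j < i := lt_of_le_of_ne h (Ne.symm hij)
        have : ζ (j + 1) ≤ ζ i := hζ hji
        simp only [coxDeBoor, Polynomial.eval_zero, ite_eq_right_iff, and_imp]
        intro h1 _
        linarith
  | succ p ih =>
    obtain ⟨q1, hq1d, hq1⟩ := ih i
    obtain ⟨q2, hq2d, hq2⟩ := ih (i + 1)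
    refine ⟨(if ζ (i + p + 1) = ζ i then 0
        else Polynomial.C (1 / (ζ (i + p + 1) - ζ i)) * (Polynomial.X - Polynomial.C (ζ i)) * q1) +
      (if ζ (i + p + 2) = ζ (i + 1) then 0
        else Polynomial.C (1 / (ζ (i + p + 2) - ζ (i + 1))) *
          (Polynomial.C (ζ (i + p + 2)) - Polynomial.X) * q2), ?_, ?_⟩
    · refine le_trans (Polynomial.natDegree_add_le _ _) (max_le ?_ ?_)
      · split_ifs
        · simp
        · calc (Polynomial.C (1 / (ζ (i + p + 1) - ζ i)) * (Polynomial.X - Polynomial.C (ζ i)) * q1).natDegree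
            ≤ (Polynomial.C (1 / (ζ (i + p + 1) - ζ i)) * (Polynomial.X - Polynomial.C (ζ i))).natDegree + q1.natDegree :=
              Polynomial.natDegree_mul_le
          _ ≤ 1 + p := by
              gcongr
              refine le_trans Polynomial.natDegree_mul_le ?_
              simp [Polynomial.natDegree_X_sub_C]
          _ = p + 1 := by omega
      · split_ifs
        · simp
        · calc (Polynomial.C (1 / (ζ (i + p + 2) - ζ (i + 1))) * (Polynomial.C (ζ (i + p + 2)) - Polynomial.X) * q2).natDegree
            ≤ (Polynomial.C (1 / (ζ (i + p + 2) - ζ (i + 1))) * (Polynomial.C (ζ (i + p + 2)) - Polynomial.X)).natDegree + q2.natDegree :=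
              Polynomial.natDegree_mul_le
          _ ≤ 1 + p := by
              gcongr
              refine le_trans Polynomial.natDegree_mul_le ?_
              have : (Polynomial.C (ζ (i + p + 2)) - Polynomial.X : Polynomial ℝ).natDegree ≤ 1 := by
                refine le_trans (Polynomial.natDegree_sub_le _ _) ?_
                simp
              simp only [Polynomial.natDegree_C, zero_add]
              exact this
          _ = p + 1 := by omega
    · intro x hx1 hx2
      simp only [coxDeBoor, hq1 x hx1 hx2, hq2 x hx1 hx2, Polynomial.eval_add,
        Polynomial.eval_mul, Polynomial.eval_sub, Polynomial.eval_C, Polynomial.eval_X,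
        apply_ite (Polynomial.eval x), Polynomial.eval_zero]
      split_ifs <;> ring
end

section
/- Let m ≥ 1 be an integer and let f : ℝ → ℝ be m-times continuously differentiable on an open interval containing the point a. For h > 0 let d(h) ∈ ℝ^m be the unique vector satisfying the linear system Σ_{k=0}^{m−1} ((jh)^k / k!) · d_k(h) = f(a + jh) for j = 0, 1, …, m−1. Then there exist constants C > 0 and h₀ > 0 such that for all 0 < h < h₀ and all k = 0, 1, …, m−1, |d_k(h) − f^{(k)}(a)| ≤ C · h^{m−k}. -/
/-!
Put `u_k = h^k (d_k - f^{(k)}(a))`. The system becomes `W u = r` for the fixed matrix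
`W_{jk} = j^k / k!`, a Vandermonde matrix times an invertible diagonal one, with right-hand side
`r_j = f(a + jh) - T_{m-1}(a + jh)` the Taylor remainder of order `m` at `a + jh`, so
`|r_j| = O(h^m)`. Hence `h^k |d_k - f^{(k)}(a)| = |u_k| ≤ ‖W⁻¹‖ ‖r‖ = O(h^m)`.
-/

open Set Matrix
open scoped Nat

attribute [local instance] Matrix.linftyOpNormedAddCommGroup Matrix.linftyOpNormedRing

section TaylorVandermonde

variable (K : Type*) [Field K]

def taylorVandermonde (m : ℕ) : Matrix (Fin m) (Fin m) K :=
  of fun j k => (j : K) ^ (k : ℕ) / ((k : ℕ)! : K)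

theorem taylorVandermonde_eq_vandermonde_mul_diagonal (m : ℕ) :
    taylorVandermonde K m =
      vandermonde (fun j : Fin m => (j : K)) * diagonal fun k : Fin m => ((k : ℕ)! : K)⁻¹ := by
  ext j k
  simp [taylorVandermonde, mul_diagonal, div_eq_mul_inv]

theorem det_taylorVandermonde_ne_zero [CharZero K] (m : ℕ) :
    (taylorVandermonde K m).det ≠ 0 := by
  rw [taylorVandermonde_eq_vandermonde_mul_diagonal, det_mul, det_diagonal]
  refine mul_ne_zero (det_vandermonde_ne_zero_iff.2 fun i j hij => ?_) ?_
  · exact Fin.ext (Nat.cast_injective hij)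
  · exact Finset.prod_ne_zero_iff.2 fun k _ =>
      inv_ne_zero (Nat.cast_ne_zero.2 (Nat.factorial_ne_zero _))

variable {K}

theorem taylorVandermonde_mulVec_pow_mul {m : ℕ} (h : K) (v : Fin m → K) :
    taylorVandermonde K m *ᵥ (fun k => h ^ (k : ℕ) * v k) =
      fun j : Fin m => ∑ k : Fin m, ((j : K) * h) ^ (k : ℕ) / ((k : ℕ)! : K) * v k := by
  ext j
  simp only [mulVec, dotProduct, taylorVandermonde, of_apply, mul_pow]
  exact Finset.sum_congr rfl fun k _ => by ring

end TaylorVandermonde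

theorem norm_le_norm_inv_mul_norm_mulVec {n : Type*} [Fintype n] [DecidableEq n]
    {A : Matrix n n ℝ} (hA : IsUnit A.det) (v : n → ℝ) : ‖v‖ ≤ ‖A⁻¹‖ * ‖A *ᵥ v‖ := by
  calc ‖v‖ = ‖A⁻¹ *ᵥ (A *ᵥ v)‖ := by rw [mulVec_mulVec, nonsing_inv_mul A hA, one_mulVec]
    _ ≤ ‖A⁻¹‖ * ‖A *ᵥ v‖ := linfty_opNorm_mulVec _ _

theorem abs_le_of_abs_taylor_sum_le {m : ℕ} {h ε : ℝ} (hh : 0 < h) (e : Fin m → ℝ)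
    (hres : ∀ j : Fin m, |∑ k : Fin m, ((j : ℝ) * h) ^ (k : ℕ) / ((k : ℕ)! : ℝ) * e k| ≤ ε * h ^ m)
    (k : Fin m) : |e k| ≤ ‖(taylorVandermonde ℝ m)⁻¹‖ * ε * h ^ (m - k) := by
  have : Nonempty (Fin m) := ⟨k⟩
  set W := taylorVandermonde ℝ m
  have hu : |h ^ (k : ℕ) * e k| ≤ ‖W⁻¹‖ * (ε * h ^ m) := by
    calc |h ^ (k : ℕ) * e k| ≤ ‖fun i : Fin m => h ^ (i : ℕ) * e i‖ :=
          norm_le_pi_norm (fun i : Fin m => h ^ (i : ℕ) * e i) k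
      _ ≤ ‖W⁻¹‖ * ‖W *ᵥ fun i => h ^ (i : ℕ) * e i‖ :=
          norm_le_norm_inv_mul_norm_mulVec
            (isUnit_iff_ne_zero.2 (det_taylorVandermonde_ne_zero ℝ m)) _
      _ ≤ ‖W⁻¹‖ * (ε * h ^ m) := by
          gcongr
          rw [taylorVandermonde_mulVec_pow_mul, pi_norm_le_iff_of_nonempty]
          exact hres
  have hpow : h ^ m = h ^ (m - k) * h ^ (k : ℕ) := by rw [← pow_add, Nat.sub_add_cancel k.is_lt.le]
  rw [abs_mul, abs_of_pos (pow_pos hh _), hpow] at hu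
  exact le_of_mul_le_mul_right (by linarith) (pow_pos hh (k : ℕ))

theorem taylorWithinEval_eq_of_subset {E : Type*} [NormedAddCommGroup E] [NormedSpace ℝ E]
    {f : ℝ → E} {n : ℕ} {s t : Set ℝ} {x₀ : ℝ} (hst : s ⊆ t) (hs : UniqueDiffOn ℝ s)
    (ht : UniqueDiffOn ℝ t) (hf : ContDiffOn ℝ n f t) (hx₀ : x₀ ∈ s) :
    taylorWithinEval f n s x₀ = taylorWithinEval f n t x₀ := by
  ext x
  simp only [taylor_within_apply]
  refine Finset.sum_congr rfl fun k hk => ?_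
  rw [iteratedDerivWithin_eq_iteratedFDerivWithin, iteratedDerivWithin_eq_iteratedFDerivWithin,
    iteratedFDerivWithin_subset hst hs ht (hf.of_le ?_) hx₀]
  exact_mod_cast Nat.lt_succ_iff.mp (Finset.mem_range.mp hk)

theorem exists_norm_sub_taylorWithinEval_le {E : Type*} [NormedAddCommGroup E] [NormedSpace ℝ E]
    {f : ℝ → E} {n : ℕ} {U : Set ℝ} {a : ℝ} (hU : IsOpen U) (ha : a ∈ U)
    (hf : ContDiffOn ℝ (n + 1) f U) :
    ∃ C, ∃ δ > 0, ∀ x ∈ Icc 0 δ,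
      ‖f (a + x) - taylorWithinEval f n U a (a + x)‖ ≤ C * x ^ (n + 1) := by
  obtain ⟨c, hac, hcU⟩ := exists_Ico_subset_of_mem_nhds (hU.mem_nhds ha) ⟨a + 1, by linarith⟩
  obtain ⟨b, hab, hbc⟩ := exists_between hac
  have hsub : Icc a b ⊆ U := (Icc_subset_Ico_right hbc).trans hcU
  obtain ⟨C, hC⟩ := exists_taylor_mean_remainder_bound hab.le (hf.mono hsub)
  rw [taylorWithinEval_eq_of_subset hsub (uniqueDiffOn_Icc hab) hU.uniqueDiffOn
    (hf.of_le (by norm_cast; omega)) (left_mem_Icc.2 hab.le)] at hC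
  refine ⟨C, b - a, by linarith, fun x hx => ?_⟩
  simpa using hC (a + x) ⟨by linarith [hx.1], by linarith [hx.2]⟩

theorem taylorWithinEval_add_eq_sum (f : ℝ → ℝ) (n : ℕ) (s : Set ℝ) (a x : ℝ) :
    taylorWithinEval f n s a (a + x) =
      ∑ k : Fin (n + 1), x ^ (k : ℕ) / ((k : ℕ)! : ℝ) * iteratedDerivWithin k f s a := by
  rw [taylor_within_apply, ← Fin.sum_univ_eq_sum_range]
  refine Finset.sum_congr rfl fun k _ => ?_
  rw [smul_eq_mul, add_sub_cancel_left]
  ring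

theorem taylor_vandermonde_boundary_derivatives_general (m : ℕ) (f : ℝ → ℝ)
    (a α β : ℝ) (ha : a ∈ Set.Ioo α β) (hf : ContDiffOn ℝ m f (Set.Ioo α β)) :
    ∃ C > (0:ℝ), ∃ h₀ > (0:ℝ), ∀ h : ℝ, 0 < h → h < h₀ →
      ∀ d : Fin m → ℝ,
        (∀ j : Fin m,
          ∑ k : Fin m, ((j : ℝ) * h) ^ (k : ℕ) / (Nat.factorial (k : ℕ)) * d k
            = f (a + (j : ℝ) * h)) →
        ∀ k : Fin m,
          |d k - iteratedDerivWithin (k : ℕ) f (Set.Ioo α β) a|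
            ≤ C * h ^ (m - (k : ℕ)) := by
  obtain _ | n := m
  · exact ⟨1, one_pos, 1, one_pos, fun _ _ _ _ _ k => k.elim0⟩
  obtain ⟨C, δ, hδ, hC⟩ := exists_norm_sub_taylorWithinEval_le isOpen_Ioo ha hf
  set ε := |C| * ((n + 1 : ℕ) : ℝ) ^ (n + 1)
  set W := taylorVandermonde ℝ (n + 1)
  refine ⟨‖W⁻¹‖ * ε + 1, by positivity, δ / (n + 1 : ℕ), by positivity,
    fun h hh hhδ d hd k => ?_⟩
  have hres : ∀ j : Fin (n + 1), |∑ i : Fin (n + 1), ((j : ℝ) * h) ^ (i : ℕ) / ((i : ℕ)! : ℝ) *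
      (d i - iteratedDerivWithin i f (Ioo α β) a)| ≤ ε * h ^ (n + 1) := by
    intro j
    have hj : (j : ℝ) ≤ (n + 1 : ℕ) := by exact_mod_cast j.is_lt.le
    have hjh : (j : ℝ) * h ∈ Icc 0 δ := by
      refine ⟨by positivity, ?_⟩
      calc (j : ℝ) * h ≤ (n + 1 : ℕ) * (δ / (n + 1 : ℕ)) := by gcongr
        _ = δ := by field_simp
    simp only [mul_sub, Finset.sum_sub_distrib, hd j, ← taylorWithinEval_add_eq_sum]
    calc _ ≤ C * ((j : ℝ) * h) ^ (n + 1) := hC _ hjh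
      _ ≤ |C| * (((n + 1 : ℕ) : ℝ) * h) ^ (n + 1) := by
          gcongr
          exact le_abs_self C
      _ = ε * h ^ (n + 1) := by rw [mul_pow]; ring
  calc _ ≤ ‖W⁻¹‖ * ε * h ^ (n + 1 - k) := abs_le_of_abs_taylor_sum_le hh _ hres k
    _ ≤ (‖W⁻¹‖ * ε + 1) * h ^ (n + 1 - k) := by gcongr; linarith

/-- if `f` is `m`-times continuously differentiable on an open interval
containing `a`, and for small `h > 0` the vector `d(h)` solves the Taylor–Vandermonde
system `∑_{k<m} ((jh)^k/k!) d_k = f(a + jh)` for `j = 0,…,m−1`, then each component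
satisfies `|d_k(h) − f^{(k)}(a)| ≤ C h^{m−k}`. -/
theorem taylor_vandermonde_boundary_derivatives (m : ℕ) (hm : 1 ≤ m) (f : ℝ → ℝ)
    (a α β : ℝ) (ha : a ∈ Set.Ioo α β) (hf : ContDiffOn ℝ m f (Set.Ioo α β)) :
    ∃ C > (0:ℝ), ∃ h₀ > (0:ℝ), ∀ h : ℝ, 0 < h → h < h₀ →
      ∀ d : Fin m → ℝ,
        (∀ j : Fin m,
          ∑ k : Fin m, ((j : ℝ) * h) ^ (k : ℕ) / (Nat.factorial (k : ℕ)) * d k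
            = f (a + (j : ℝ) * h)) →
        ∀ k : Fin m,
          |d k - iteratedDerivWithin (k : ℕ) f (Set.Ioo α β) a|
            ≤ C * h ^ (m - (k : ℕ)) :=
  taylor_vandermonde_boundary_derivatives_general m f a α β ha hf
end

section
/- Let p ≥ 1 be an integer, a < b real numbers, and let f, s : ℝ → ℝ be p-times continuously differentiable on an open interval containing [a, b] with s^{(k)}(a) = f^{(k)}(a) and s^{(k)}(b) = f^{(k)}(b) for all k = 0, 1, …, p−1. Let r : ℝ → ℝ be the (b−a)-periodic extension of (f − s) restricted to [a, b), rescaled to period 2π via r̃(x) = r(a + (b−a)x/(2π)). Then r̃ is (p−1)-times continuously differentiable on ℝ and there exists a constant C > 0 such that its Fourier coefficients satisfy |r̂̃(ℓ)| ≤ C · |ℓ|^{−p} for all nonzero integers ℓ. -/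
/-!
Put `F = f - s`; `r` is `(b - a)`-periodic and agrees with `F` on `[a, b]`. A periodic function
that is `Cⁿ` on one closed period is `Cⁿ` on `ℝ` as soon as its one-sided derivatives of order
`≤ n` agree at the two ends, since then the left derivative at a gluing point `a` (read off at
`b` by periodicity) equals the right one; for `r` these derivatives are all `0`.
For the decay, integrate by parts `p` times over one period: the boundary terms cancel because
the derivatives of order `< p` of the `C^{p-1}` periodic function are periodic, each step gains a
factor `(b - a) / (2π |ℓ|)`, and the last coefficient is bounded by the sup of the `p`-th
derivative on the compact period.
-/

open Set Function Complex MeasureTheory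

noncomputable def fourierCoeff2pi (g : ℝ → ℂ) (ℓ : ℤ) : ℂ :=
  (1 / (2 * (Real.pi : ℂ))) *
    ∫ x in (0:ℝ)..(2 * Real.pi), g x * Complex.exp (-(Complex.I * (ℓ : ℂ) * (x : ℂ)))

section Subset

variable {𝕜 F : Type*} [NontriviallyNormedField 𝕜] [NormedAddCommGroup F] [NormedSpace 𝕜 F]
  {f s : 𝕜 → F} {I U : Set 𝕜} {n k : ℕ} {x : 𝕜}

theorem iteratedDerivWithin_subset (hIU : I ⊆ U) (hI : UniqueDiffOn 𝕜 I) (hU : UniqueDiffOn 𝕜 U)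
    (hf : ContDiffOn 𝕜 n f U) (hx : x ∈ I) :
    iteratedDerivWithin n f I x = iteratedDerivWithin n f U x := by
  simp only [iteratedDerivWithin, iteratedFDerivWithin_subset hIU hI hU hf hx]

theorem iteratedDerivWithin_sub_eq_zero_of_subset (hIU : I ⊆ U) (hI : UniqueDiffOn 𝕜 I)
    (hU : UniqueDiffOn 𝕜 U) (hf : ContDiffOn 𝕜 n f U) (hs : ContDiffOn 𝕜 n s U) (hk : k ≤ n)
    (hx : x ∈ I) (h : iteratedDerivWithin k s U x = iteratedDerivWithin k f U x) :
    iteratedDerivWithin k (f - s) I x = 0 := by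
  have hfk : ContDiffOn 𝕜 k f U := hf.of_le (by exact_mod_cast hk)
  have hsk : ContDiffOn 𝕜 k s U := hs.of_le (by exact_mod_cast hk)
  rw [iteratedDerivWithin_sub hx hI (hfk.mono hIU x hx) (hsk.mono hIU x hx),
    iteratedDerivWithin_subset hIU hI hU hfk hx, iteratedDerivWithin_subset hIU hI hU hsk hx, h,
    sub_self]

end Subset

theorem Function.Periodic.eqOn_Icc_of_eqOn_Ico {β : Type*} {r F : ℝ → β} {a b : ℝ}
    (hr : Periodic r (b - a)) (hab : a < b) (hrF : EqOn r F (Ico a b)) (hend : F a = F b) :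
    EqOn r F (Icc a b) := by
  rintro x ⟨hax, hxb⟩
  rcases hxb.lt_or_eq with hxb | rfl
  · exact hrF ⟨hax, hxb⟩
  · rw [← hend, ← hrF ⟨le_rfl, hab⟩, ← hr a, add_sub_cancel]

section Periodic

theorem Function.Periodic.comp_toIcoMod {β : Type*} {g : ℝ → β} {L : ℝ} (hg : Periodic g L)
    (hL : 0 < L) (a t : ℝ) : g (toIcoMod hL a t) = g t := by
  rw [← self_sub_toIcoDiv_zsmul, hg.sub_zsmul_eq]

theorem Function.Periodic.continuous_of_continuousOn_Icc {β : Type*} [TopologicalSpace β]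
    {g : ℝ → β} {a L : ℝ} (hg : Periodic g L) (hL : 0 < L) (hc : ContinuousOn g (Icc a (a + L))) :
    Continuous g := by
  have := Fact.mk hL
  have hlift : AddCircle.liftIco L a g ∘ (↑) = g := funext (hg.comp_toIcoMod hL a)
  rw [← hlift]
  exact (AddCircle.liftIco_continuous (by rw [hg]) hc).comp continuous_quotient_mk'

variable {E : Type*} [NormedAddCommGroup E] [NormedSpace ℝ E] {g : ℝ → E} {a L : ℝ}

theorem Function.Periodic.deriv (hg : Periodic g L) : Periodic (deriv g) L := fun x => by
  rw [← deriv_comp_add_const, funext hg]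

theorem Function.Periodic.iteratedDeriv (hg : Periodic g L) (n : ℕ) :
    Periodic (iteratedDeriv n g) L := by
  induction n with
  | zero => simpa using hg
  | succ n ih => simpa only [iteratedDeriv_succ] using ih.deriv

theorem Function.Periodic.hasDerivAt_of_hasDerivWithinAt_Icc (hg : Periodic g L) (hL : 0 < L)
    {g' : E} (ha : HasDerivWithinAt g g' (Icc a (a + L)) a)
    (hb : HasDerivWithinAt g g' (Icc a (a + L)) (a + L)) : HasDerivAt g g' a := by
  have hright : HasDerivWithinAt g g' (Ici a) a :=
    ha.mono_of_mem_nhdsWithin (Icc_mem_nhdsGE (by linarith))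
  have hleft : HasDerivWithinAt g g' (Iic a) a := by
    have hb' : HasDerivWithinAt g g' (Iic (a + L)) (a + L) :=
      hb.mono_of_mem_nhdsWithin (Icc_mem_nhdsLE (by linarith))
    have := hb'.scomp a ((hasDerivAt_id a).add_const L).hasDerivWithinAt
      (fun x (hx : x ≤ a) => show x + L ≤ a + L by linarith)
    rwa [show g ∘ (fun x => id x + L) = g from funext fun x => hg x, one_smul] at this
  have := hleft.union hright
  rwa [Iic_union_Ici, hasDerivWithinAt_univ] at this

theorem Function.Periodic.differentiable_of_differentiableOn_Icc (hg : Periodic g L)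
    (hL : 0 < L) (hd : DifferentiableOn ℝ g (Icc a (a + L)))
    (hend : derivWithin g (Icc a (a + L)) a = derivWithin g (Icc a (a + L)) (a + L)) :
    Differentiable ℝ g := by
  have hIco : ∀ m ∈ Ico a (a + L), DifferentiableAt ℝ g m := by
    rintro m ⟨ham, hmb⟩
    rcases ham.eq_or_lt with rfl | ham
    · have hb := (hd (a + L) ⟨by linarith, le_rfl⟩).hasDerivWithinAt
      rw [← hend] at hb
      exact (hg.hasDerivAt_of_hasDerivWithinAt_Icc hL
        (hd a ⟨le_rfl, by linarith⟩).hasDerivWithinAt hb).differentiableAt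
    · exact (hd m ⟨ham.le, hmb.le⟩).differentiableAt (Icc_mem_nhds ham hmb)
  intro t
  have hshift : DifferentiableAt ℝ (fun x => g (x - toIcoDiv hL a t • L)) t := by
    rw [differentiableAt_comp_sub_const, self_sub_toIcoDiv_zsmul]
    exact hIco _ (toIcoMod_mem_Ico hL a t)
  simpa only [hg.sub_zsmul_eq] using hshift

theorem Function.Periodic.contDiff_of_contDiffOn_Icc (hg : Periodic g L) (hL : 0 < L) {n : ℕ}
    (hc : ContDiffOn ℝ n g (Icc a (a + L)))
    (hend : ∀ k ≤ n, iteratedDerivWithin k g (Icc a (a + L)) a =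
      iteratedDerivWithin k g (Icc a (a + L)) (a + L)) :
    ContDiff ℝ n g := by
  have hI : UniqueDiffOn ℝ (Icc a (a + L)) := uniqueDiffOn_Icc (by linarith)
  induction n generalizing g with
  | zero => exact contDiff_zero.2 (hg.continuous_of_continuousOn_Icc hL hc.continuousOn)
  | succ n ih =>
    rw [Nat.cast_succ, contDiffOn_succ_iff_derivWithin hI] at hc
    have hdiff : Differentiable ℝ g :=
      hg.differentiable_of_differentiableOn_Icc hL hc.1 (by simpa using hend 1 (by omega))
    have hderiv : EqOn (_root_.deriv g) (derivWithin g (Icc a (a + L))) (Icc a (a + L)) :=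
      fun x hx => ((hdiff x).derivWithin (hI x hx)).symm
    rw [Nat.cast_succ, contDiff_succ_iff_deriv]
    refine ⟨hdiff, by simp, ih hg.deriv (hc.2.2.congr hderiv) fun k hk => ?_⟩
    rw [iteratedDerivWithin_congr hderiv ⟨le_rfl, by linarith⟩,
      iteratedDerivWithin_congr hderiv ⟨by linarith, le_rfl⟩, ← iteratedDerivWithin_succ']
    exact hend (k + 1) (by omega)

theorem Function.Periodic.iteratedDerivWithin_Icc_left_eq_right (hg : Periodic g L) (hL : 0 < L)
    {n k : ℕ} (hc : ContDiff ℝ n g) (hk : k ≤ n) :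
    iteratedDerivWithin k g (Icc a (a + L)) a =
      iteratedDerivWithin k g (Icc a (a + L)) (a + L) := by
  have hI : UniqueDiffOn ℝ (Icc a (a + L)) := uniqueDiffOn_Icc (by linarith)
  have hck : ∀ x, ContDiffAt ℝ k g x := fun x => (hc.of_le (by exact_mod_cast hk)).contDiffAt
  rw [iteratedDerivWithin_eq_iteratedDeriv hI (hck a) ⟨le_rfl, by linarith⟩,
    iteratedDerivWithin_eq_iteratedDeriv hI (hck _) ⟨by linarith, le_rfl⟩, hg.iteratedDeriv k a]

end Periodic

section FourierDecay

variable {a b : ℝ} (hab : a < b)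

theorem fourierCoeffOn_eq_of_hasDerivAt_Ioo_of_eq {f f' : ℝ → ℂ} {n : ℤ} (hn : n ≠ 0)
    (hf : ContinuousOn f (Icc a b)) (hff' : ∀ x ∈ Ioo a b, HasDerivAt f (f' x) x)
    (hf' : IntervalIntegrable f' volume a b) (hend : f a = f b) :
    fourierCoeffOn hab f n = (b - a) / (2 * Real.pi * I * n) * fourierCoeffOn hab f' n := by
  have hpi : (Real.pi : ℂ) ≠ 0 := ofReal_ne_zero.2 Real.pi_ne_zero
  have hn' : (n : ℂ) ≠ 0 := Int.cast_ne_zero.2 hn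
  rw [fourierCoeffOn_of_hasDerivAt_Ioo hab hn (by rwa [uIcc_of_le hab.le])
    (by rwa [min_eq_left hab.le, max_eq_right hab.le]) hf', hend, sub_self, mul_zero, zero_sub]
  field_simp

theorem norm_fourierCoeffOn_le {f : ℝ → ℂ} {M : ℝ} (hM : ∀ x ∈ Icc a b, ‖f x‖ ≤ M) (n : ℤ) :
    ‖fourierCoeffOn hab f n‖ ≤ M := by
  rw [fourierCoeffOn_eq_integral, norm_smul, Real.norm_of_nonneg (by simp [hab.le]), one_div,
    inv_mul_le_iff₀ (by linarith), mul_comm, ← abs_of_pos (sub_pos.2 hab)]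
  refine intervalIntegral.norm_integral_le_of_norm_le_const fun x hx => ?_
  rw [uIoc_of_le hab.le] at hx
  rw [norm_smul, fourier_apply, Circle.norm_coe, one_mul]
  exact hM x (Ioc_subset_Icc_self hx)

theorem norm_fourierCoeffOn_eq_of_contDiffOn {n : ℕ} {g : ℝ → ℂ}
    (hg : ContDiffOn ℝ n g (Icc a b))
    (hend : ∀ k < n, iteratedDerivWithin k g (Icc a b) a = iteratedDerivWithin k g (Icc a b) b)
    {ℓ : ℤ} (hℓ : ℓ ≠ 0) :
    ‖fourierCoeffOn hab g ℓ‖ =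
      ((b - a) / (2 * Real.pi * |(ℓ : ℝ)|)) ^ n *
        ‖fourierCoeffOn hab (iteratedDerivWithin n g (Icc a b)) ℓ‖ := by
  have hI : UniqueDiffOn ℝ (Icc a b) := uniqueDiffOn_Icc hab
  induction n generalizing g with
  | zero => simp
  | succ n ih =>
    have hdiff : DifferentiableOn ℝ g (Icc a b) := hg.differentiableOn (by simp)
    rw [Nat.cast_succ, contDiffOn_succ_iff_derivWithin hI] at hg
    have hstep := fourierCoeffOn_eq_of_hasDerivAt_Ioo_of_eq hab hℓ hdiff.continuousOn
      (fun x hx => (hdiff x (Ioo_subset_Icc_self hx)).hasDerivWithinAt.hasDerivAt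
        (Icc_mem_nhds hx.1 hx.2))
      (hg.2.2.continuousOn.intervalIntegrable_of_Icc hab.le) (by simpa using hend 0 (by omega))
    have hend' : ∀ k < n, iteratedDerivWithin k (derivWithin g (Icc a b)) (Icc a b) a =
        iteratedDerivWithin k (derivWithin g (Icc a b)) (Icc a b) b := fun k hk => by
      simpa only [← iteratedDerivWithin_succ'] using hend (k + 1) (by omega)
    have hfactor :
        ‖((b : ℂ) - a) / (2 * Real.pi * I * ℓ)‖ = (b - a) / (2 * Real.pi * |(ℓ : ℝ)|) := by
      rw [norm_div, norm_mul, norm_mul, norm_mul, norm_I, norm_real, norm_intCast, ← ofReal_sub,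
        norm_real, Real.norm_of_nonneg (sub_pos.2 hab).le, Real.norm_of_nonneg Real.pi_pos.le,
        norm_ofNat, mul_one]
    rw [hstep, norm_mul, hfactor, ih hg.2.2 hend', iteratedDerivWithin_succ', ← mul_assoc,
      ← pow_succ']

theorem exists_norm_fourierCoeffOn_le_of_contDiffOn {n : ℕ} {g : ℝ → ℂ}
    (hg : ContDiffOn ℝ n g (Icc a b))
    (hend : ∀ k < n, iteratedDerivWithin k g (Icc a b) a = iteratedDerivWithin k g (Icc a b) b) :
    ∃ C > 0, ∀ ℓ : ℤ, ℓ ≠ 0 → ‖fourierCoeffOn hab g ℓ‖ ≤ C / |(ℓ : ℝ)| ^ n := by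
  obtain ⟨M, hM⟩ := isCompact_Icc.exists_bound_of_continuousOn
    (hg.continuousOn_iteratedDerivWithin le_rfl (uniqueDiffOn_Icc hab))
  refine ⟨((b - a) / (2 * Real.pi)) ^ n * max M 1, by
    have := sub_pos.2 hab; positivity, fun ℓ hℓ => ?_⟩
  have hℓ' : 0 < |(ℓ : ℝ)| := abs_pos.2 (Int.cast_ne_zero.2 hℓ)
  rw [norm_fourierCoeffOn_eq_of_contDiffOn hab hg hend hℓ, div_mul_eq_div_div, div_pow,
    div_mul_eq_mul_div]
  gcongr
  exact norm_fourierCoeffOn_le hab (fun x hx => (hM x hx).trans (le_max_left M 1)) ℓ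

end FourierDecay

theorem fourierCoeff2pi_eq_fourierCoeffOn (g : ℝ → ℂ) (ℓ : ℤ) :
    fourierCoeff2pi g ℓ = fourierCoeffOn Real.two_pi_pos g ℓ := by
  have hpi : (Real.pi : ℂ) ≠ 0 := ofReal_ne_zero.2 Real.pi_ne_zero
  rw [fourierCoeff2pi, fourierCoeffOn_eq_integral, sub_zero, real_smul]
  congr 1
  · push_cast; ring
  · refine intervalIntegral.integral_congr fun x _ => ?_
    rw [fourier_coe_apply, smul_eq_mul, mul_comm]
    congr 2
    push_cast
    field_simp

theorem Function.Periodic.exists_norm_fourierCoeff2pi_le {r : ℝ → ℝ} {a b : ℝ} (hab : a < b)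
    (hr : Periodic r (b - a)) {n : ℕ} (hC : ContDiff ℝ n r)
    (hI : ContDiffOn ℝ (n + 1 : ℕ) r (Icc a b)) :
    ∃ C > 0, ∀ ℓ : ℤ, ℓ ≠ 0 →
      ‖fourierCoeff2pi (fun x => (r (a + (b - a) * x / (2 * Real.pi)) : ℂ)) ℓ‖ ≤
        C / |(ℓ : ℝ)| ^ (n + 1) := by
  set φ : ℝ → ℝ := fun x => a + (b - a) * x / (2 * Real.pi)
  have hφ : ContDiff ℝ ⊤ φ := by fun_prop
  have hφI : MapsTo φ (Icc 0 (2 * Real.pi)) (Icc a b) := by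
    rintro x ⟨h0, h2π⟩
    have h0' : 0 ≤ x / (2 * Real.pi) := div_nonneg h0 Real.two_pi_pos.le
    have h1' : x / (2 * Real.pi) ≤ 1 := div_le_one_of_le₀ h2π Real.two_pi_pos.le
    simp only [φ, mul_div_assoc, mem_Icc]
    constructor <;> nlinarith
  set g : ℝ → ℂ := fun x => (r (φ x) : ℂ)
  have hg : Periodic g (2 * Real.pi) := fun x => by
    simp only [g, φ, mul_add, add_div, mul_div_cancel_right₀ _ Real.two_pi_pos.ne', ← add_assoc]
    exact congrArg _ (hr _)
  have hgC : ContDiff ℝ n g := ofRealCLM.contDiff.comp (hC.comp (hφ.of_le le_top))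
  have hgI : ContDiffOn ℝ (n + 1 : ℕ) g (Icc 0 (2 * Real.pi)) :=
    ofRealCLM.contDiff.comp_contDiffOn (hI.comp (hφ.of_le le_top).contDiffOn hφI)
  simp only [fourierCoeff2pi_eq_fourierCoeffOn]
  exact exists_norm_fourierCoeffOn_le_of_contDiffOn Real.two_pi_pos hgI fun k hk => by
    simpa using hg.iteratedDerivWithin_Icc_left_eq_right (a := 0) Real.two_pi_pos hgC
      (Nat.lt_succ_iff.1 hk)

/-- central periodization property of the BSPF method: if `f` and `s` are
`p`-times continuously differentiable on an open interval containing `[a,b]` and the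
derivatives of `s` match those of `f` at `a` and `b` up to order `p−1`, then the
`(b−a)`-periodic extension `r` of `(f − s)|_{[a,b)}`, rescaled to period `2π` via
`r̃(x) = r(a + (b−a)x/(2π))`, is `(p−1)`-times continuously differentiable on `ℝ` and its
Fourier coefficients decay like `|ℓ|^{−p}`. -/
theorem bspf_periodization (p : ℕ) (hp : 1 ≤ p) (a b α β : ℝ) (hab : a < b)
    (hsub : Set.Icc a b ⊆ Set.Ioo α β) (f s : ℝ → ℝ)
    (hf : ContDiffOn ℝ p f (Set.Ioo α β)) (hs : ContDiffOn ℝ p s (Set.Ioo α β))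
    (hmatch : ∀ k < p,
      iteratedDerivWithin k s (Set.Ioo α β) a = iteratedDerivWithin k f (Set.Ioo α β) a ∧
      iteratedDerivWithin k s (Set.Ioo α β) b = iteratedDerivWithin k f (Set.Ioo α β) b)
    (r : ℝ → ℝ) (hrper : ∀ x : ℝ, r (x + (b - a)) = r x)
    (hreq : ∀ x ∈ Set.Ico a b, r x = f x - s x) :
    ContDiff ℝ (p - 1) (fun x : ℝ => r (a + (b - a) * x / (2 * Real.pi))) ∧
      ∃ C > (0:ℝ), ∀ ℓ : ℤ, ℓ ≠ 0 →
        ‖fourierCoeff2pi (fun x : ℝ => (r (a + (b - a) * x / (2 * Real.pi)) : ℂ)) ℓ‖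
          ≤ C / |(ℓ : ℝ)| ^ p := by
  obtain ⟨n, rfl⟩ : ∃ n, p = n + 1 := ⟨p - 1, by omega⟩
  have hI : UniqueDiffOn ℝ (Icc a b) := uniqueDiffOn_Icc hab
  have hF : ContDiffOn ℝ (n + 1 : ℕ) (f - s) (Icc a b) := (hf.sub hs).mono hsub
  have hFend : ∀ k ≤ n, iteratedDerivWithin k (f - s) (Icc a b) a = 0 ∧
      iteratedDerivWithin k (f - s) (Icc a b) b = 0 := fun k hk =>
    ⟨iteratedDerivWithin_sub_eq_zero_of_subset hsub hI (uniqueDiffOn_Ioo α β) hf hs (by omega)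
      (left_mem_Icc.2 hab.le) (hmatch k (by omega)).1,
    iteratedDerivWithin_sub_eq_zero_of_subset hsub hI (uniqueDiffOn_Ioo α β) hf hs (by omega)
      (right_mem_Icc.2 hab.le) (hmatch k (by omega)).2⟩
  have hrF : EqOn r (f - s) (Icc a b) := Periodic.eqOn_Icc_of_eqOn_Ico hrper hab hreq
    (by simpa using (hFend 0 n.zero_le).1.trans (hFend 0 n.zero_le).2.symm)
  have hrI : ContDiffOn ℝ (n + 1 : ℕ) r (Icc a b) := hF.congr hrF
  have hr : ContDiff ℝ n r := by
    refine Periodic.contDiff_of_contDiffOn_Icc (a := a) hrper (sub_pos.2 hab) ?_ fun k hk => ?_ <;>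
      rw [add_sub_cancel]
    · exact hrI.of_le (by exact_mod_cast n.le_succ)
    · rw [iteratedDerivWithin_congr hrF (left_mem_Icc.2 hab.le),
        iteratedDerivWithin_congr hrF (right_mem_Icc.2 hab.le), (hFend k hk).1, (hFend k hk).2]
  refine ⟨?_, Periodic.exists_norm_fourierCoeff2pi_le hab hrper hr hrI⟩
  exact_mod_cast hr.comp (by fun_prop : ContDiff ℝ n fun x : ℝ => a + (b - a) * x / (2 * Real.pi))
end
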